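/- arXiv:1510.03891 — 5 statements merged into one kernel-verified Lean document; each statement's English description precedes it below -/
import Mathlib

section
/- Let λ > 0 and let x : Ω → ℝ^N, y : Ω → ℝ^q be square-integrable random vectors. With W_out := (Γ + λI_N)⁻¹ C and a_out := μ_y − W_outᵀ μ_x, the characteristic error of the optimal readout satisfies MSE(W_out, a_out) = trace(Σ_y − W_outᵀ (Γ + 2λ I_N) W_out). -/
open Matrix MeasureTheory

/-!
With `a_out = μ_y - W_outᵀ μ_x` the residual `W_outᵀ x + a_out - y` is the centred residual
`W_outᵀ (x - μ_x) - (y - μ_y)`, whose mean square is `tr (WᵀΓW - 2 WᵀC + Σ_y)` for every `W`.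
The ridge normal equation `(Γ + λI) W_out = C` turns `W_outᵀ C` into `W_outᵀ (Γ + λI) W_out`,
which gives the claimed trace. This needs no invertibility: if `Γ + λI` is singular, the junk
value of `⁻¹` is `0`, so `W_out = 0` and both sides vanish.
-/

section CrossMoment

variable {Ω ι κ : Type*} [MeasurableSpace Ω] [Fintype ι] [Fintype κ] {μ : Measure Ω}
  {u : Ω → ι → ℝ} {v : Ω → κ → ℝ}

noncomputable def crossMoment (μ : Measure Ω) (u : Ω → ι → ℝ) (v : Ω → κ → ℝ) : Matrix ι κ ℝ :=
  of fun i k => ∫ ω, u ω i * v ω k ∂μ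

theorem dotProduct_mulVec_eq_sum (a : ι → ℝ) (P : Matrix ι κ ℝ) (b : κ → ℝ) :
    a ⬝ᵥ (P *ᵥ b) = ∑ i, ∑ k, P i k * (a i * b k) := by
  simp only [dotProduct, mulVec, Finset.mul_sum]
  exact Finset.sum_congr rfl fun i _ => Finset.sum_congr rfl fun k _ => by ring

theorem integrable_dotProduct_mulVec (hu : MemLp u 2 μ) (hv : MemLp v 2 μ)
    (P : Matrix ι κ ℝ) : Integrable (fun ω => u ω ⬝ᵥ (P *ᵥ v ω)) μ := by
  simp only [dotProduct_mulVec_eq_sum]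
  exact integrable_finsetSum _ fun i _ => integrable_finsetSum _ fun k _ =>
    ((hu.eval i).integrable_mul (hv.eval k)).const_mul _

theorem integral_dotProduct_mulVec (hu : MemLp u 2 μ) (hv : MemLp v 2 μ)
    (P : Matrix ι κ ℝ) : ∫ ω, u ω ⬝ᵥ (P *ᵥ v ω) ∂μ = trace (Pᵀ * crossMoment μ u v) := by
  have hint i k : Integrable (fun ω => P i k * (u ω i * v ω k)) μ :=
    ((hu.eval i).integrable_mul (hv.eval k)).const_mul _
  simp only [dotProduct_mulVec_eq_sum]
  rw [integral_finsetSum _ fun i _ => integrable_finsetSum _ fun k _ => hint i k]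
  simp only [integral_finsetSum _ fun k _ => hint _ k, integral_const_mul]
  simp only [trace, diag, mul_apply, transpose_apply, crossMoment, of_apply]
  exact Finset.sum_comm

theorem transpose_mulVec_sub_dotProduct_self [DecidableEq κ] (W : Matrix ι κ ℝ) (a : ι → ℝ)
    (b : κ → ℝ) :
    (Wᵀ *ᵥ a - b) ⬝ᵥ (Wᵀ *ᵥ a - b)
      = a ⬝ᵥ ((W * Wᵀ) *ᵥ a) - 2 * a ⬝ᵥ (W *ᵥ b) + b ⬝ᵥ (1 *ᵥ b) := by
  have hW (c : κ → ℝ) : (Wᵀ *ᵥ a) ⬝ᵥ c = a ⬝ᵥ (W *ᵥ c) := by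
    rw [dotProduct_mulVec, mulVec_transpose]
  rw [← mulVec_mulVec, one_mulVec, ← hW, ← hW, sub_dotProduct, dotProduct_sub, dotProduct_sub,
    dotProduct_comm b]
  ring

theorem integral_transpose_mulVec_sub_dotProduct_self [DecidableEq κ] (hu : MemLp u 2 μ)
    (hv : MemLp v 2 μ) (W : Matrix ι κ ℝ) :
    ∫ ω, (Wᵀ *ᵥ u ω - v ω) ⬝ᵥ (Wᵀ *ᵥ u ω - v ω) ∂μ
      = trace (Wᵀ * crossMoment μ u u * W - 2 • (Wᵀ * crossMoment μ u v)
          + crossMoment μ v v) := by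
  have huu := integrable_dotProduct_mulVec hu hu (W * Wᵀ)
  have huv := (integrable_dotProduct_mulVec hu hv W).const_mul 2
  have hvv := integrable_dotProduct_mulVec hv hv 1
  simp only [transpose_mulVec_sub_dotProduct_self]
  rw [integral_add (by exact huu.sub huv) hvv, integral_sub huu huv, integral_const_mul,
    integral_dotProduct_mulVec hu hu, integral_dotProduct_mulVec hu hv,
    integral_dotProduct_mulVec hv hv, trace_add, trace_sub, trace_smul, transpose_mul,
    transpose_transpose, transpose_one, Matrix.one_mul, Matrix.mul_assoc, trace_mul_comm W,
    nsmul_eq_mul, Nat.cast_ofNat]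

end CrossMoment

theorem Matrix.transpose_mul_mul_eq_of_eq_inv_mul {n m R : Type*} [Fintype n] [DecidableEq n]
    [CommRing R] {A : Matrix n n R} {C W : Matrix n m R} (hW : W = A⁻¹ * C) :
    Wᵀ * A * W = Wᵀ * C := by
  by_cases hA : IsUnit A.det
  · rw [hW, Matrix.mul_assoc, ← Matrix.mul_assoc A, mul_nonsing_inv _ hA, Matrix.one_mul]
  · simp [hW, nonsing_inv_apply_not_isUnit _ hA]

theorem stmt_2_general {Ω : Type*} [MeasureSpace Ω] [IsProbabilityMeasure (volume : Measure Ω)]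
    {N q : ℕ} (lam : ℝ)
    (x : Ω → Fin N → ℝ) (y : Ω → Fin q → ℝ)
    (hx : MemLp x 2 volume) (hy : MemLp y 2 volume)
    (μx : Fin N → ℝ)
    (μy : Fin q → ℝ)
    (Γ : Matrix (Fin N) (Fin N) ℝ)
    (hΓ : Γ = Matrix.of fun i j => ∫ ω, (x ω i - μx i) * (x ω j - μx j))
    (C : Matrix (Fin N) (Fin q) ℝ)
    (hC : C = Matrix.of fun i k => ∫ ω, (x ω i - μx i) * (y ω k - μy k))
    (Sy : Matrix (Fin q) (Fin q) ℝ)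
    (hSy : Sy = Matrix.of fun k l => ∫ ω, (y ω k - μy k) * (y ω l - μy l))
    (MSE : Matrix (Fin N) (Fin q) ℝ → (Fin q → ℝ) → ℝ)
    (hMSE : MSE = fun W a => ∫ ω, ∑ k, (Wᵀ.mulVec (x ω) k + a k - y ω k) ^ 2)
    (Wout : Matrix (Fin N) (Fin q) ℝ)
    (hWout : Wout = (Γ + lam • (1 : Matrix (Fin N) (Fin N) ℝ))⁻¹ * C)
    (aout : Fin q → ℝ) (haout : aout = μy - Woutᵀ.mulVec μx) :
    MSE Wout aout =
      Matrix.trace (Sy - Woutᵀ * (Γ + (2 * lam) • (1 : Matrix (Fin N) (Fin N) ℝ)) * Wout) := by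
  have hu : MemLp (fun ω => x ω - μx) 2 volume := hx.sub (memLp_const μx)
  have hv : MemLp (fun ω => y ω - μy) 2 volume := hy.sub (memLp_const μy)
  have hcentred ω : ∑ k, ((Woutᵀ *ᵥ x ω) k + aout k - y ω k) ^ 2
      = (Woutᵀ *ᵥ (x ω - μx) - (y ω - μy)) ⬝ᵥ (Woutᵀ *ᵥ (x ω - μx) - (y ω - μy)) := by
    simp only [dotProduct, sq, haout, mulVec_sub, Pi.sub_apply]
    exact Finset.sum_congr rfl fun k _ => by ring
  have hnormal := transpose_mul_mul_eq_of_eq_inv_mul hWout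
  have hΓ' : Γ = crossMoment volume (fun ω => x ω - μx) (fun ω => x ω - μx) := hΓ
  have hC' : C = crossMoment volume (fun ω => x ω - μx) (fun ω => y ω - μy) := hC
  have hSy' : Sy = crossMoment volume (fun ω => y ω - μy) (fun ω => y ω - μy) := hSy
  rw [hMSE]
  simp only [hcentred]
  rw [integral_transpose_mulVec_sub_dotProduct_self hu hv, ← hΓ', ← hC', ← hSy', ← hnormal]
  congr 1
  simp only [Matrix.mul_add, Matrix.add_mul, Matrix.mul_smul, Matrix.smul_mul, Matrix.mul_one]
  module

/-- the characteristic error of the optimal readout satisfies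
`MSE(W_out, a_out) = trace(Σ_y − W_outᵀ (Γ + 2λ I) W_out)`. -/
theorem stmt_2 {Ω : Type*} [MeasureSpace Ω] [IsProbabilityMeasure (volume : Measure Ω)]
    {N q : ℕ} (lam : ℝ) (hlam : 0 < lam)
    (x : Ω → Fin N → ℝ) (y : Ω → Fin q → ℝ)
    (hx : MemLp x 2 volume) (hy : MemLp y 2 volume)
    (μx : Fin N → ℝ) (hμx : μx = fun i => ∫ ω, x ω i)
    (μy : Fin q → ℝ) (hμy : μy = fun k => ∫ ω, y ω k)
    (Γ : Matrix (Fin N) (Fin N) ℝ)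
    (hΓ : Γ = Matrix.of fun i j => ∫ ω, (x ω i - μx i) * (x ω j - μx j))
    (C : Matrix (Fin N) (Fin q) ℝ)
    (hC : C = Matrix.of fun i k => ∫ ω, (x ω i - μx i) * (y ω k - μy k))
    (Sy : Matrix (Fin q) (Fin q) ℝ)
    (hSy : Sy = Matrix.of fun k l => ∫ ω, (y ω k - μy k) * (y ω l - μy l))
    (MSE : Matrix (Fin N) (Fin q) ℝ → (Fin q → ℝ) → ℝ)
    (hMSE : MSE = fun W a => ∫ ω, ∑ k, (Wᵀ.mulVec (x ω) k + a k - y ω k) ^ 2)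
    (Wout : Matrix (Fin N) (Fin q) ℝ)
    (hWout : Wout = (Γ + lam • (1 : Matrix (Fin N) (Fin N) ℝ))⁻¹ * C)
    (aout : Fin q → ℝ) (haout : aout = μy - Woutᵀ.mulVec μx) :
    MSE Wout aout =
      Matrix.trace (Sy - Woutᵀ * (Γ + (2 * lam) • (1 : Matrix (Fin N) (Fin N) ℝ)) * Wout) :=
  stmt_2_general lam x y hx hy μx μy Γ hΓ C hC Sy hSy MSE hMSE Wout hWout aout haout
end

section
/- Let Γ ∈ M_N(ℝ) be symmetric, Σ_y ∈ M_q(ℝ) symmetric, and C ∈ M_{N,q}(ℝ) be such that the block matrix [[Γ, C],[Cᵀ, Σ_y]] ∈ M_{N+q}(ℝ) is positive semidefinite, and let λ > 0. Then 0 ≤ trace( Cᵀ (Γ + λ I_N)⁻¹ (Γ + 2λ I_N) (Γ + λ I_N)⁻¹ C ) ≤ trace(Σ_y). Consequently, if trace(Σ_y) > 0, the memory capacity C_H := trace(Cᵀ(Γ+λI_N)⁻¹(Γ+2λI_N)(Γ+λI_N)⁻¹C)/trace(Σ_y) satisfies 0 ≤ C_H ≤ 1. -/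
/-!
With the ridge readout `W = (Γ + λ I)⁻¹ C`, i.e. `C = (Γ + λ I) W`, the capacity numerator is
`Wᴴ (Γ + 2λ I) W`, which is positive semidefinite, and `Σ_y` minus it equals
`Σ_y - Cᴴ W - Wᴴ C + Wᴴ Γ W`, the covariance of the residual `y - Wᴴ x`. The latter is the
conjugate of the joint covariance block matrix by the column `[-W; I]`, hence positive
semidefinite as well. Taking traces gives both bounds.
-/

open Matrix

namespace Matrix

theorem PosSemidef.sub_add_of_fromBlocks {m n R : Type*} [Fintype m] [Fintype n] [DecidableEq n]
    [Ring R] [PartialOrder R] [StarRing R] {A : Matrix m m R} {B : Matrix m n R}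
    {D : Matrix n n R} (h : (fromBlocks A B Bᴴ D).PosSemidef) (W : Matrix m n R) :
    (D - Bᴴ * W - Wᴴ * B + Wᴴ * A * W).PosSemidef := by
  convert h.conjTranspose_mul_mul_same (fromRows (-W) 1) using 1
  rw [conjTranspose_fromRows_eq_fromCols_conjTranspose, Matrix.mul_assoc _ (fromBlocks A B Bᴴ D),
    fromBlocks_mul_fromRows, fromCols_mul_fromRows]
  simp only [conjTranspose_neg, conjTranspose_one, Matrix.neg_mul, Matrix.mul_neg, Matrix.one_mul,
    Matrix.mul_one, Matrix.mul_add, Matrix.mul_assoc]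
  abel

section Ridge

open scoped ComplexOrder

variable {m n 𝕜 : Type*} [DecidableEq m] [RCLike 𝕜]

theorem PosSemidef.posDef_add_smul_one {Γ : Matrix m m 𝕜} (hΓ : Γ.PosSemidef) {lam : ℝ}
    (hlam : 0 < lam) :
    (Γ + lam • 1).PosDef :=
  PosDef.posSemidef_add hΓ (PosDef.one.smul hlam)

variable [Fintype m]

theorem conjTranspose_mul_inv_mul_mul_inv_mul {A : Matrix m m 𝕜} (hAH : Aᴴ = A) (hA : IsUnit A)
    (M : Matrix m m 𝕜) (W : Matrix m n 𝕜) :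
    (A * W)ᴴ * A⁻¹ * M * A⁻¹ * (A * W) = Wᴴ * M * W := by
  have hA' := (isUnit_iff_isUnit_det A).mp hA
  rw [conjTranspose_mul, hAH, Matrix.mul_assoc _ A⁻¹ (A * W), nonsing_inv_mul_cancel_left _ _ hA',
    Matrix.mul_assoc Wᴴ A, mul_nonsing_inv _ hA', Matrix.mul_one]

theorem ridge_residual_eq {Γ : Matrix m m 𝕜} (hΓ : Γᴴ = Γ) (lam : ℝ) (Sy : Matrix n n 𝕜)
    (W : Matrix m n 𝕜) :
    Sy - ((Γ + lam • 1) * W)ᴴ * W - Wᴴ * ((Γ + lam • 1) * W) + Wᴴ * Γ * W =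
      Sy - Wᴴ * (Γ + (2 * lam) • 1) * W := by
  simp only [conjTranspose_mul, conjTranspose_add, conjTranspose_smul, conjTranspose_one, hΓ,
    star_trivial, Matrix.mul_add, Matrix.add_mul, Matrix.mul_assoc, two_mul, add_smul]
  abel

variable [Fintype n] {Γ : Matrix m m 𝕜} {lam : ℝ}

theorem PosSemidef.ridge_numerator (hΓ : Γ.PosSemidef) (hlam : 0 < lam) (C : Matrix m n 𝕜) :
    (Cᴴ * (Γ + lam • 1)⁻¹ * (Γ + (2 * lam) • 1) * (Γ + lam • 1)⁻¹ * C).PosSemidef := by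
  have hA := hΓ.posDef_add_smul_one hlam
  obtain ⟨W, rfl⟩ : ∃ W, C = (Γ + lam • 1) * W :=
    ⟨_, (mul_nonsing_inv_cancel_left _ C ((isUnit_iff_isUnit_det _).mp hA.isUnit)).symm⟩
  rw [conjTranspose_mul_inv_mul_mul_inv_mul hA.isHermitian hA.isUnit]
  have hM := hΓ.posDef_add_smul_one (by linarith : 0 < 2 * lam)
  exact hM.posSemidef.conjTranspose_mul_mul_same W

theorem PosSemidef.sub_ridge_numerator [DecidableEq n] {C : Matrix m n 𝕜} {Sy : Matrix n n 𝕜}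
    (h : (fromBlocks Γ C Cᴴ Sy).PosSemidef) (hlam : 0 < lam) :
    (Sy - Cᴴ * (Γ + lam • 1)⁻¹ * (Γ + (2 * lam) • 1) * (Γ + lam • 1)⁻¹ * C).PosSemidef := by
  have hΓ : Γ.PosSemidef := h.submatrix Sum.inl
  have hA := hΓ.posDef_add_smul_one hlam
  obtain ⟨W, rfl⟩ : ∃ W, C = (Γ + lam • 1) * W :=
    ⟨_, (mul_nonsing_inv_cancel_left _ C ((isUnit_iff_isUnit_det _).mp hA.isUnit)).symm⟩
  rw [conjTranspose_mul_inv_mul_mul_inv_mul hA.isHermitian hA.isUnit,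
    ← ridge_residual_eq hΓ.isHermitian]
  exact h.sub_add_of_fromBlocks W

end Ridge

end Matrix

theorem stmt_4_general {N q : ℕ}
    (Γ : Matrix (Fin N) (Fin N) ℝ)
    (Sy : Matrix (Fin q) (Fin q) ℝ)
    (C : Matrix (Fin N) (Fin q) ℝ)
    (hblock : (Matrix.fromBlocks Γ C Cᵀ Sy).PosSemidef)
    (lam : ℝ) (hlam : 0 < lam) :
    0 ≤ Matrix.trace (Cᵀ * (Γ + lam • (1 : Matrix (Fin N) (Fin N) ℝ))⁻¹
        * (Γ + (2 * lam) • (1 : Matrix (Fin N) (Fin N) ℝ))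
        * (Γ + lam • (1 : Matrix (Fin N) (Fin N) ℝ))⁻¹ * C) ∧
    Matrix.trace (Cᵀ * (Γ + lam • (1 : Matrix (Fin N) (Fin N) ℝ))⁻¹
        * (Γ + (2 * lam) • (1 : Matrix (Fin N) (Fin N) ℝ))
        * (Γ + lam • (1 : Matrix (Fin N) (Fin N) ℝ))⁻¹ * C) ≤ Matrix.trace Sy ∧
    (0 < Matrix.trace Sy →
      0 ≤ Matrix.trace (Cᵀ * (Γ + lam • (1 : Matrix (Fin N) (Fin N) ℝ))⁻¹
            * (Γ + (2 * lam) • (1 : Matrix (Fin N) (Fin N) ℝ))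
            * (Γ + lam • (1 : Matrix (Fin N) (Fin N) ℝ))⁻¹ * C) / Matrix.trace Sy ∧
      Matrix.trace (Cᵀ * (Γ + lam • (1 : Matrix (Fin N) (Fin N) ℝ))⁻¹
            * (Γ + (2 * lam) • (1 : Matrix (Fin N) (Fin N) ℝ))
            * (Γ + lam • (1 : Matrix (Fin N) (Fin N) ℝ))⁻¹ * C) / Matrix.trace Sy ≤ 1) := by
  rw [← conjTranspose_eq_transpose_of_trivial] at hblock ⊢
  have h0 := ((hblock.submatrix Sum.inl).ridge_numerator hlam C).trace_nonneg
  have hle := (hblock.sub_ridge_numerator hlam).trace_nonneg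
  rw [trace_sub, sub_nonneg] at hle
  exact ⟨h0, hle, fun hpos => ⟨div_nonneg h0 hpos.le, (div_le_one hpos).mpr hle⟩⟩

/-- if the joint covariance block matrix is positive semidefinite, the
memory capacity numerator is between `0` and `trace Σ_y`, so the capacity is in `[0,1]`. -/
theorem stmt_4 {N q : ℕ}
    (Γ : Matrix (Fin N) (Fin N) ℝ) (hΓ : Γᵀ = Γ)
    (Sy : Matrix (Fin q) (Fin q) ℝ) (hSy : Syᵀ = Sy)
    (C : Matrix (Fin N) (Fin q) ℝ)
    (hblock : (Matrix.fromBlocks Γ C Cᵀ Sy).PosSemidef)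
    (lam : ℝ) (hlam : 0 < lam) :
    0 ≤ Matrix.trace (Cᵀ * (Γ + lam • (1 : Matrix (Fin N) (Fin N) ℝ))⁻¹
        * (Γ + (2 * lam) • (1 : Matrix (Fin N) (Fin N) ℝ))
        * (Γ + lam • (1 : Matrix (Fin N) (Fin N) ℝ))⁻¹ * C) ∧
    Matrix.trace (Cᵀ * (Γ + lam • (1 : Matrix (Fin N) (Fin N) ℝ))⁻¹
        * (Γ + (2 * lam) • (1 : Matrix (Fin N) (Fin N) ℝ))
        * (Γ + lam • (1 : Matrix (Fin N) (Fin N) ℝ))⁻¹ * C) ≤ Matrix.trace Sy ∧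
    (0 < Matrix.trace Sy →
      0 ≤ Matrix.trace (Cᵀ * (Γ + lam • (1 : Matrix (Fin N) (Fin N) ℝ))⁻¹
            * (Γ + (2 * lam) • (1 : Matrix (Fin N) (Fin N) ℝ))
            * (Γ + lam • (1 : Matrix (Fin N) (Fin N) ℝ))⁻¹ * C) / Matrix.trace Sy ∧
      Matrix.trace (Cᵀ * (Γ + lam • (1 : Matrix (Fin N) (Fin N) ℝ))⁻¹
            * (Γ + (2 * lam) • (1 : Matrix (Fin N) (Fin N) ℝ))
            * (Γ + lam • (1 : Matrix (Fin N) (Fin N) ℝ))⁻¹ * C) / Matrix.trace Sy ≤ 1) :=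
  stmt_4_general Γ Sy C hblock lam hlam
end

section
/- Let N ≥ 1, ξ > 0 and Φ ∈ ℝ with |Φ| < 1 − e^{−ξ}. Define the matrix A ∈ M_N(ℝ) by: A_{ij} = e^{−(i−j)ξ} Φ for 1 ≤ j ≤ i ≤ N with (i,j) ≠ (N,N) and j ≤ N−1, A_{ij} = 0 for i < j ≤ N−1, A_{iN} = e^{−iξ} for 1 ≤ i ≤ N−1, and A_{NN} = Φ + e^{−Nξ}. Then every complex eigenvalue of A has modulus strictly less than 1, i.e., the spectral radius of A satisfies ρ(A) < 1. -/
/-!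
With `r = e^{-ξ}`, row `i` of `A` (0-based) is dominated entrywise in absolute value by
`|Φ| r^{i-j}` for `j ≤ i` plus `r^{i+1}` in the last column; the diagonal entry `Φ + r^N`
of the last row is handled by the triangle inequality. Its absolute row sum is therefore at most
`|Φ| (1 + r + ⋯ + r^i) + r^{i+1}`, which is `< (1 - r)(1 + r + ⋯ + r^i) + r^{i+1} = 1`,
and Gershgorin's theorem bounds every eigenvalue by the largest absolute row sum.
-/

open Matrix Finset

theorem Matrix.exists_norm_le_sum_norm_row_of_mem_spectrum {K n : Type*} [NormedField K]
    [Fintype n] [DecidableEq n] {M : Matrix n n K} {μ : K} (hμ : μ ∈ spectrum K M) :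
    ∃ k, ‖μ‖ ≤ ∑ j, ‖M k j‖ := by
  rw [← Matrix.spectrum_toLin', ← Module.End.hasEigenvalue_iff_mem_spectrum] at hμ
  obtain ⟨k, hk⟩ := eigenvalue_mem_ball hμ
  refine ⟨k, ?_⟩
  rw [← add_sum_erase _ _ (mem_univ k)]
  calc ‖μ‖ ≤ ‖M k k‖ + ‖μ - M k k‖ := norm_le_norm_add_norm_sub' μ (M k k)
    _ ≤ _ := by gcongr; rwa [← dist_eq_norm, ← Metric.mem_closedBall]

theorem mul_geom_sum_add_pow_lt_one {α : Type*} [Field α] [LinearOrder α]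
    [IsStrictOrderedRing α] {r c : α} (hr : 0 ≤ r) (hc : c < 1 - r) {n : ℕ} (hn : 0 < n) :
    c * ∑ k ∈ range n, r ^ k + r ^ n < 1 := by
  have hS : 0 < ∑ k ∈ range n, r ^ k :=
    sum_pos' (fun k _ => pow_nonneg hr k) ⟨0, mem_range.mpr hn, by simp⟩
  have hgeom : (1 - r) * ∑ k ∈ range n, r ^ k = 1 - r ^ n := by
    rw [mul_comm, geom_sum_mul_neg]
  nlinarith

theorem Real.exp_neg_natCast_mul (n : ℕ) (x : ℝ) :
    Real.exp (-(n : ℝ) * x) = Real.exp (-x) ^ n := by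
  rw [← Real.exp_nat_mul]
  ring_nf

theorem sum_fin_triangle_add_last {R : Type*} [CommSemiring R] {N m : ℕ} (hm : m < N)
    (r c d : R) :
    ∑ j : Fin N, ((if j.val ≤ m then r ^ (m - j.val) * c else 0) +
      (if j.val = N - 1 then d else 0)) = c * ∑ k ∈ range (m + 1), r ^ k + d := by
  rw [Fin.sum_univ_eq_sum_range (fun j => (if j ≤ m then r ^ (m - j) * c else 0) +
      (if j = N - 1 then d else 0)), sum_add_distrib, sum_ite_eq',
    if_pos (mem_range.mpr (by omega)), ← sum_filter, mul_sum, ← sum_range_reflect]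
  congr 1
  refine sum_congr (by ext; simp; omega) fun j _ => ?_
  rw [mul_comm]
  congr 2

theorem abs_reservoir_entry_le {N : ℕ} (ξ Φ : ℝ) (A : Matrix (Fin N) (Fin N) ℝ)
    (hA : ∀ i j : Fin N,
      A i j =
        if j.val = N - 1 then
          (if i.val = N - 1 then Φ + Real.exp (-(N : ℝ) * ξ)
           else Real.exp (-((i.val : ℝ) + 1) * ξ))
        else if j.val ≤ i.val then Real.exp (-((i.val : ℝ) - (j.val : ℝ)) * ξ) * Φ
        else 0) (i j : Fin N) :
    |A i j| ≤ (if j.val ≤ i.val then Real.exp (-ξ) ^ (i.val - j.val) * |Φ| else 0) +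
      (if j.val = N - 1 then Real.exp (-ξ) ^ (i.val + 1) else 0) := by
  have hpos (n : ℕ) : 0 < Real.exp (-ξ) ^ n := pow_pos (Real.exp_pos _) n
  rw [hA]
  by_cases hj : j.val = N - 1
  · have hlt := i.isLt
    by_cases hi : i.val = N - 1
    · have hN : (N : ℝ) = ((i.val + 1 : ℕ) : ℝ) := by norm_cast; omega
      rw [if_pos hj, if_pos hi, if_pos (by omega), if_pos hj, hN, Real.exp_neg_natCast_mul,
        hi, hj, Nat.sub_self, pow_zero, one_mul]
      exact (abs_add_le _ _).trans_eq (by rw [abs_of_pos (hpos _)])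
    · have hcast : ((i.val : ℝ) + 1) = ((i.val + 1 : ℕ) : ℝ) := by push_cast; rfl
      rw [if_pos hj, if_neg hi, if_pos hj, hcast, Real.exp_neg_natCast_mul,
        abs_of_pos (hpos _)]
      exact le_add_of_nonneg_left (by split_ifs <;> positivity)
  · rw [if_neg hj, if_neg hj, add_zero]
    split_ifs with hji
    · rw [← Nat.cast_sub hji, Real.exp_neg_natCast_mul, abs_mul, abs_of_pos (hpos _)]
    · simp

/-- Indices are 0-based: `A i j` is the paper's entry `A_{(i+1)(j+1)}`. -/
theorem stmt_12_general {N : ℕ} (ξ Φ : ℝ)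
    (hΦ : |Φ| < 1 - Real.exp (-ξ))
    (A : Matrix (Fin N) (Fin N) ℝ)
    (hA : ∀ i j : Fin N,
      A i j =
        if j.val = N - 1 then
          (if i.val = N - 1 then Φ + Real.exp (-(N : ℝ) * ξ)
           else Real.exp (-((i.val : ℝ) + 1) * ξ))
        else if j.val ≤ i.val then Real.exp (-((i.val : ℝ) - (j.val : ℝ)) * ξ) * Φ
        else 0) :
    ∀ μ ∈ spectrum ℂ (A.map (Complex.ofReal : ℝ → ℂ)), ‖μ‖ < 1 := by
  intro μ hμ
  obtain ⟨k, hk⟩ := Matrix.exists_norm_le_sum_norm_row_of_mem_spectrum hμ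
  calc ‖μ‖ ≤ ∑ j, |A k j| := by
        simpa only [map_apply, Complex.norm_real, Real.norm_eq_abs] using hk
    _ ≤ ∑ j : Fin N, ((if j.val ≤ k.val then Real.exp (-ξ) ^ (k.val - j.val) * |Φ| else 0) +
        (if j.val = N - 1 then Real.exp (-ξ) ^ (k.val + 1) else 0)) :=
      sum_le_sum fun j _ => abs_reservoir_entry_le ξ Φ A hA k j
    _ = |Φ| * ∑ n ∈ range (k.val + 1), Real.exp (-ξ) ^ n + Real.exp (-ξ) ^ (k.val + 1) :=
      sum_fin_triangle_add_last k.isLt _ _ _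
    _ < 1 := mul_geom_sum_add_pow_lt_one (Real.exp_pos _).le hΦ k.val.succ_pos

/-- the connectivity matrix of a discrete-time time-delay reservoir
linearized at a stable fixed point (with `|Φ| < 1 − e^{−ξ}`) has all its complex
eigenvalues of modulus strictly less than one.  Indices here are 0-based: the entry
`A i j` corresponds to the paper's entry `A_{(i+1)(j+1)}`. -/
theorem stmt_12 {N : ℕ} (hN : 1 ≤ N) (ξ Φ : ℝ) (hξ : 0 < ξ)
    (hΦ : |Φ| < 1 - Real.exp (-ξ))
    (A : Matrix (Fin N) (Fin N) ℝ)
    (hA : ∀ i j : Fin N,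
      A i j =
        if j.val = N - 1 then
          (if i.val = N - 1 then Φ + Real.exp (-(N : ℝ) * ξ)
           else Real.exp (-((i.val : ℝ) + 1) * ξ))
        else if j.val ≤ i.val then Real.exp (-((i.val : ℝ) - (j.val : ℝ)) * ξ) * Φ
        else 0) :
    ∀ μ ∈ spectrum ℂ (A.map (Complex.ofReal : ℝ → ℂ)), ‖μ‖ < 1 :=
  stmt_12_general ξ Φ hΦ A hA
end

section
/- Let l ≥ 1 and let w : Ω → ℝ^{2l} be a random vector whose law is the centered multivariate Gaussian distribution N(0, Σ) with covariance matrix Σ ∈ M_{2l}(ℝ) symmetric positive semidefinite. Then E[∏_{a=1}^{2l} w_a] = Hf(Σ) := Σ_{pairings} ∏_{{a,b} ∈ π} Σ_{ab}, where the sum runs over all partitions π of {1,…,2l} into l disjoint two-element subsets (equivalently, over all decompositions {1,…,2l} = {i'₁,…,i'_l} ⊔ {j'₁,…,j'_l} with i'₁<⋯<i'_l, j'₁<⋯<j'_l and i'_w < j'_w for each w, summing the products Σ_{i'₁j'₁}⋯Σ_{i'_lj'_l}). -/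
open Matrix MeasureTheory ProbabilityTheory
open scoped Classical

/-- The standard Gaussian measure on `ι → ℝ`: the product of standard normal laws. -/
noncomputable def stdGaussianPi (ι : Type*) [Fintype ι] : Measure (ι → ℝ) :=
  Measure.pi fun _ : ι => gaussianReal 0 1

/-- A measure on `ι → ℝ` is the centered multivariate Gaussian `N(0, S)` if it is the
pushforward of the standard Gaussian by a linear map `L` with `L Lᵀ = S`. -/
def IsCenteredGaussian {ι : Type*} [Fintype ι] (ν : Measure (ι → ℝ))
    (S : Matrix ι ι ℝ) : Prop :=
  ∃ L : Matrix ι ι ℝ, L * Lᵀ = S ∧ ν = (stdGaussianPi ι).map L.mulVec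

/-- The hafnian of a square matrix of even order `m = 2l`: the sum over all perfect
matchings of `{0,…,m−1}` (encoded as fixed-point-free involutions `σ`, each pair of the
matching being `{a, σ a}` with `a < σ a`) of the products `∏_{a < σ a} S a (σ a)`. -/
noncomputable def hafnian {m : ℕ} (S : Matrix (Fin m) (Fin m) ℝ) : ℝ :=
  ∑ σ ∈ Finset.univ.filter
      (fun σ : Equiv.Perm (Fin m) => σ * σ = 1 ∧ ∀ a, σ a ≠ a),
    ∏ a ∈ Finset.univ.filter (fun a : Fin m => a < σ a), S a (σ a)

/-! Write `w = L g` with `g` a standard Gaussian vector. Expanding `∏ₐ (L g)ₐ` gives a sum over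
index maps `f` of `∏ₐ L a (f a)` times the monomial `∏ⱼ gⱼ ^ #f⁻¹(j)`. Gaussian integration by parts
gives `E[g^(k+2)] = (k+1) E[g^k]`, the recursion of the number of pairings of a `k`-set, so the
monomial has expectation `∏ⱼ #(pairings of f⁻¹(j))`, i.e. the number of pairings `σ` of the index
set with `f ∘ σ = f`. Exchanging the two sums, each pairing `σ` receives
`∑_{f ∘ σ = f} ∏ₐ L a (f a) = ∏_{a < σ a} (L Lᵀ) a (σ a)`. -/

open Finset Equiv
open scoped NNReal

def numPairings : ℕ → ℕ
  | 0 => 1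
  | 1 => 0
  | n + 2 => (n + 1) * numPairings n

def permFiberwiseEquiv {α β : Type*} (f : α → β) :
    {σ : Perm α // f ∘ σ = f} ≃ ∀ j, Perm {a // f a = j} :=
  (subtypeEquiv DomMulAct.mk fun _ => Iff.rfl).trans
    (MulOpposite.opEquiv.trans (DomMulAct.stabilizerMulEquiv f).toEquiv)

lemma permFiberwiseEquiv_apply {α β : Type*} (f : α → β) (σ : {σ : Perm α // f ∘ σ = f}) {j : β}
    (x : {a // f a = j}) : (permFiberwiseEquiv f σ j x : α) = σ.1 x := rfl

section Pairings

variable {α β : Type*} [Fintype α] [DecidableEq α]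

variable (α) in
def fixedPointFreeInvolutions : Finset (Perm α) :=
  univ.filter fun σ => σ * σ = 1 ∧ ∀ a, σ a ≠ a

lemma mem_fixedPointFreeInvolutions {σ : Perm α} :
    σ ∈ fixedPointFreeInvolutions α ↔ (∀ x, σ (σ x) = x) ∧ ∀ x, σ x ≠ x := by
  simp [fixedPointFreeInvolutions, Perm.ext_iff]

lemma ofSubtype_mul_swap_mem_fixedPointFreeInvolutions {a b : α} (hab : a ≠ b)
    {τ : Perm {x // x ≠ a ∧ x ≠ b}} (hτ : τ ∈ fixedPointFreeInvolutions _) :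
    Perm.ofSubtype τ * swap a b ∈ fixedPointFreeInvolutions α := by
  simp only [fixedPointFreeInvolutions, mem_filter, mem_univ, true_and] at hτ ⊢
  have hfix : ∀ x, ¬(x ≠ a ∧ x ≠ b) → Perm.ofSubtype τ x = x := fun x hx =>
    Perm.ofSubtype_apply_of_not_mem τ hx
  have hcomm : Commute (swap a b) (Perm.ofSubtype τ) := by
    rw [Commute, SemiconjBy, eq_comm, mul_swap_eq_swap_mul, hfix a (by simp), hfix b (by simp)]
  refine ⟨?_, fun x => ?_⟩
  · rw [hcomm.mul_mul_mul_comm, ← map_mul, hτ.1, map_one, Equiv.swap_mul_self, one_mul]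
  · by_cases hx : x ≠ a ∧ x ≠ b
    · rw [Perm.mul_apply, swap_apply_of_ne_of_ne hx.1 hx.2, Perm.ofSubtype_apply_of_mem τ hx]
      exact fun h => hτ.2 ⟨x, hx⟩ (Subtype.ext h)
    · obtain rfl | rfl : x = a ∨ x = b := by tauto
      · simp [hfix, hab.symm]
      · simp [hfix, hab]

lemma exists_ofSubtype_mul_swap_eq {σ : Perm α} (hσ : σ ∈ fixedPointFreeInvolutions α) {a b : α}
    (hσa : σ a = b) :
    ∃ τ ∈ fixedPointFreeInvolutions {x // x ≠ a ∧ x ≠ b}, Perm.ofSubtype τ * swap a b = σ := by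
  simp only [fixedPointFreeInvolutions, mem_filter, mem_univ, true_and] at hσ
  obtain ⟨hinv, hfree⟩ := hσ
  have hσσ : ∀ x, σ (σ x) = x := fun x => by rw [← Perm.mul_apply, hinv, Perm.one_apply]
  have hσb : σ b = a := hσa ▸ hσσ a
  have hcomm : Commute (swap a b) σ := by
    rw [Commute, SemiconjBy, eq_comm, mul_swap_eq_swap_mul, hσa, hσb, Equiv.swap_comm]
  set ρ := σ * swap a b with hρ_def
  have hρ : ∀ x, (x ≠ a ∧ x ≠ b) → ρ x = σ x := fun x hx => by
    simp [ρ, Perm.mul_apply, swap_apply_of_ne_of_ne hx.1 hx.2]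
  have hmaps : ∀ x, (ρ x ≠ a ∧ ρ x ≠ b) ↔ (x ≠ a ∧ x ≠ b) := by
    intro x
    by_cases hx : x ≠ a ∧ x ≠ b
    · rw [hρ x hx]
      exact iff_of_true ⟨fun h => hx.2 (by rw [← hσσ x, h, hσa]),
        fun h => hx.1 (by rw [← hσσ x, h, hσb])⟩ hx
    · obtain rfl | rfl : x = a ∨ x = b := by tauto
      · simp [ρ, hσb]
      · simp [ρ, hσa]
  have hsupp : ∀ x, ρ x ≠ x → x ≠ a ∧ x ≠ b := by
    rintro x hx
    constructor <;> rintro rfl <;> simp_all [ρ]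
  have hofSubtype : Perm.ofSubtype (ρ.subtypePerm hmaps) = ρ :=
    Perm.ofSubtype_subtypePerm hmaps hsupp
  refine ⟨ρ.subtypePerm hmaps, ?_, by rw [hofSubtype, mul_assoc, Equiv.swap_mul_self, mul_one]⟩
  simp only [fixedPointFreeInvolutions, mem_filter, mem_univ, true_and]
  refine ⟨Perm.ofSubtype_injective ?_, fun x h => hfree x ?_⟩
  · rw [map_mul, map_one, hofSubtype, hρ_def, hcomm.mul_mul_mul_comm, hinv,
      Equiv.swap_mul_self, one_mul]
  · rw [← hρ x x.2]
    exact congrArg Subtype.val h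

lemma card_fixedPointFreeInvolutions_filter_apply_eq {a b : α} (hab : a ≠ b) :
    ((fixedPointFreeInvolutions α).filter fun σ => σ a = b).card =
      (fixedPointFreeInvolutions {x // x ≠ a ∧ x ≠ b}).card := by
  symm
  refine card_bij (fun τ _ => Perm.ofSubtype τ * swap a b)
    (fun τ hτ => mem_filter.2 ⟨ofSubtype_mul_swap_mem_fixedPointFreeInvolutions hab hτ, ?_⟩)
    (fun τ₁ _ τ₂ _ h => Perm.ofSubtype_injective (mul_right_cancel h))
    (fun σ hσ => ?_)
  · simp [Perm.ofSubtype_apply_of_not_mem (p := fun x => x ≠ a ∧ x ≠ b) τ]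
  · obtain ⟨τ, hτ, rfl⟩ := exists_ofSubtype_mul_swap_eq (mem_filter.1 hσ).1 (mem_filter.1 hσ).2
    exact ⟨τ, hτ, rfl⟩

variable (α) in
lemma card_fixedPointFreeInvolutions :
    (fixedPointFreeInvolutions α).card = numPairings (Fintype.card α) := by
  obtain ⟨n, h⟩ : ∃ n, Fintype.card α = n := ⟨_, rfl⟩
  rw [h]
  induction n using Nat.strong_induction_on generalizing α with
  | _ n ih =>
    match n, h with
    | 0, h =>
      have : IsEmpty α := Fintype.card_eq_zero_iff.1 h
      simp [fixedPointFreeInvolutions, numPairings, filter_eq']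
    | 1, h =>
      obtain ⟨a, ha⟩ := Fintype.card_eq_one_iff.1 h
      have : Nonempty α := ⟨a⟩
      simp [fixedPointFreeInvolutions, numPairings, ha]
    | n + 2, h =>
      obtain ⟨a⟩ : Nonempty α := Fintype.card_pos_iff.1 (by omega)
      have hmaps : ∀ σ ∈ fixedPointFreeInvolutions α, σ a ∈ univ.erase a := by
        simp_all [fixedPointFreeInvolutions]
      have hfiber : ∀ b ∈ univ.erase a,
          ((fixedPointFreeInvolutions α).filter fun σ => σ a = b).card = numPairings n := by
        intro b hb
        have hcard : Fintype.card {x // x ≠ a ∧ x ≠ b} = n := by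
          have : univ.filter (fun x => x ≠ a ∧ x ≠ b) = (univ.erase a).erase b := by
            ext; simp [and_comm]
          rw [Fintype.card_subtype, this, card_erase_of_mem hb, card_erase_of_mem (mem_univ a),
            card_univ, h]
          rfl
        rw [card_fixedPointFreeInvolutions_filter_apply_eq (ne_of_mem_erase hb).symm,
          ih n (by omega) _ hcard]
      rw [card_eq_sum_card_fiberwise hmaps, sum_congr rfl hfiber, sum_const,
        card_erase_of_mem (mem_univ a), card_univ, h, numPairings, smul_eq_mul]
      rfl

variable [Fintype β] [DecidableEq β]

lemma card_fixedPointFreeInvolutions_filter_comp_eq (f : α → β) :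
    ((fixedPointFreeInvolutions α).filter fun σ : Perm α => f ∘ σ = f).card =
      ∏ j, numPairings (Fintype.card {a // f a = j}) := by
  have hfpf (σ : {σ : Perm α // f ∘ σ = f}) :
      σ.1 ∈ fixedPointFreeInvolutions α ↔
        ∀ j, permFiberwiseEquiv f σ j ∈ fixedPointFreeInvolutions {a // f a = j} := by
    simp only [mem_fixedPointFreeInvolutions, ne_eq, Subtype.ext_iff, permFiberwiseEquiv_apply,
      ← forall_and]
    exact ⟨fun h j x => h x, fun h x => h _ ⟨x, rfl⟩⟩
  calc ((fixedPointFreeInvolutions α).filter fun σ : Perm α => f ∘ σ = f).card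
      = Fintype.card {σ : {σ : Perm α // f ∘ σ = f} // σ.1 ∈ fixedPointFreeInvolutions α} := by
        rw [← Fintype.card_coe]
        exact Fintype.card_congr ((subtypeEquivRight fun σ => by simp [and_comm]).trans
          (subtypeSubtypeEquivSubtypeInter _ _).symm)
    _ = Fintype.card (∀ j, fixedPointFreeInvolutions {a // f a = j}) :=
        Fintype.card_congr (((permFiberwiseEquiv f).subtypeEquiv hfpf).trans subtypePiEquivPi)
    _ = ∏ j, numPairings (Fintype.card {a // f a = j}) := by
        simp [Fintype.card_pi, card_fixedPointFreeInvolutions]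

end Pairings

section ConstantOnPairs

variable {ι κ : Type*} [Fintype ι] [LinearOrder ι] {σ : Perm ι}

lemma lt_apply_iff_not_apply_lt (hσ : σ ∈ fixedPointFreeInvolutions ι) (a : ι) :
    a < σ a ↔ ¬σ a < a := by
  rw [not_lt]
  exact ⟨le_of_lt, fun h => h.lt_of_ne ((mem_fixedPointFreeInvolutions.1 hσ).2 a).symm⟩

lemma prod_eq_prod_subtype_lt_apply_mul {M : Type*} [CommMonoid M]
    (hσ : σ ∈ fixedPointFreeInvolutions ι) (g : ι → M) :
    ∏ a, g a = ∏ a : {a // a < σ a}, g a * g (σ a) := by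
  have hinv := (mem_fixedPointFreeInvolutions.1 hσ).1
  rw [← prod_subtype (univ.filter fun a => a < σ a) (by simp) fun a => g a * g (σ a),
    prod_mul_distrib, ← prod_filter_mul_prod_filter_not univ (fun a => a < σ a)]
  congr 1
  refine prod_equiv σ (fun a => ?_) (fun a _ => rfl) |>.symm
  simp [lt_apply_iff_not_apply_lt hσ a, hinv]

lemma apply_lt_apply_apply_of_not_lt (hσ : σ ∈ fixedPointFreeInvolutions ι) {a : ι}
    (h : ¬a < σ a) : σ a < σ (σ a) := by
  rwa [(mem_fixedPointFreeInvolutions.1 hσ).1, ← not_not (a := σ a < a),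
    ← lt_apply_iff_not_apply_lt hσ]

def invariantFunEquiv (hσ : σ ∈ fixedPointFreeInvolutions ι) :
    {f : ι → κ // f ∘ σ = f} ≃ ({a // a < σ a} → κ) where
  toFun f a := f.1 a
  invFun g := ⟨fun a => if h : a < σ a then g ⟨a, h⟩
      else g ⟨σ a, apply_lt_apply_apply_of_not_lt hσ h⟩, by
    have hinv := (mem_fixedPointFreeInvolutions.1 hσ).1
    funext a
    by_cases h : a < σ a
    · simp [h, hinv, (lt_apply_iff_not_apply_lt hσ a).1 h]
    · simp [h, apply_lt_apply_apply_of_not_lt hσ h]⟩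
  left_inv f := by
    ext a
    by_cases h : a < σ a
    · simp [h]
    · simpa [h] using congrFun f.2 a
  right_inv g := by ext a; simp [a.2]

lemma sum_filter_comp_eq_prod_mul_transpose [Fintype κ] [DecidableEq κ]
    (hσ : σ ∈ fixedPointFreeInvolutions ι) (L : Matrix ι κ ℝ) :
    ∑ f ∈ univ.filter (fun f : ι → κ => f ∘ σ = f), ∏ a, L a (f a) =
      ∏ a ∈ univ.filter (fun a => a < σ a), (L * Lᵀ) a (σ a) := by
  calc ∑ f ∈ univ.filter (fun f : ι → κ => f ∘ σ = f), ∏ a, L a (f a)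
      = ∑ f : {f : ι → κ // f ∘ σ = f},
          ∏ a : {a // a < σ a}, L a (f.1 a) * L (σ a) (f.1 a) := by
        refine (sum_subtype _ (fun f => by simp) _).trans (Fintype.sum_congr _ _ fun f => ?_)
        rw [prod_eq_prod_subtype_lt_apply_mul hσ]
        exact Fintype.prod_congr _ _ fun a => by rw [← congrFun f.2 a]; rfl
    _ = ∑ g : {a // a < σ a} → κ, ∏ a : {a // a < σ a}, L a (g a) * L (σ a) (g a) :=
        Fintype.sum_equiv (invariantFunEquiv hσ) _ _ fun _ => rfl
    _ = ∏ a : {a // a < σ a}, (L * Lᵀ) a (σ a) := by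
        refine (Fintype.prod_sum fun (a : {a // a < σ a}) j => L a j * L (σ a) j).symm.trans ?_
        simp [mul_apply]
    _ = ∏ a ∈ univ.filter (fun a => a < σ a), (L * Lᵀ) a (σ a) :=
        (prod_subtype (p := fun a => a < σ a) _ (by simp) fun a => (L * Lᵀ) a (σ a)).symm

end ConstantOnPairs

lemma hasDerivAt_gaussianPDFReal_zero (v : ℝ≥0) (x : ℝ) :
    HasDerivAt (gaussianPDFReal 0 v) (-(x / v) * gaussianPDFReal 0 v x) x := by
  simp only [gaussianPDFReal_def, sub_zero]
  refine (((hasDerivAt_pow 2 x).neg.div_const (2 * (v : ℝ))).exp.const_mul _).congr_deriv ?_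
  by_cases hv : (v : ℝ) = 0
  · simp [hv]
  · simp only [Pi.neg_apply]; field_simp; ring

lemma integrable_pow_gaussianReal (μ : ℝ) (v : ℝ≥0) (k : ℕ) :
    Integrable (fun x => x ^ k) (gaussianReal μ v) :=
  ((memLp_id_gaussianReal (k : ℝ≥0)).integrable_norm_pow').mono'
    (by fun_prop) (.of_forall fun x => by simp)

lemma integrable_gaussianReal_iff_integrable_gaussianPDFReal_mul (μ : ℝ) {v : ℝ≥0} (hv : v ≠ 0)
    {f : ℝ → ℝ} :
    Integrable f (gaussianReal μ v) ↔ Integrable fun x => gaussianPDFReal μ v x * f x := by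
  rw [gaussianReal_of_var_ne_zero _ hv, integrable_withDensity_iff_integrable_smul'
    (measurable_gaussianPDF μ v) (.of_forall fun _ => gaussianPDF_lt_top)]
  simp [gaussianPDF, ENNReal.toReal_ofReal (gaussianPDFReal_nonneg μ v _)]

lemma integral_pow_add_two_gaussianReal {v : ℝ≥0} (hv : v ≠ 0) (k : ℕ) :
    ∫ x, x ^ (k + 2) ∂gaussianReal 0 v = (k + 1) * v * ∫ x, x ^ k ∂gaussianReal 0 v := by
  have hv' : (v : ℝ) ≠ 0 := by exact_mod_cast hv
  have hint (n : ℕ) : Integrable fun x => gaussianPDFReal 0 v x * x ^ n :=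
    (integrable_gaussianReal_iff_integrable_gaussianPDFReal_mul 0 hv).1
      (integrable_pow_gaussianReal 0 v n)
  -- `p' = -(x / v) p` for the density `p`, so `∫ (p x^(k+1))' = 0` is the claimed recursion
  have hderiv (x : ℝ) : HasDerivAt (fun x => gaussianPDFReal 0 v x * x ^ (k + 1))
      ((k + 1) * (gaussianPDFReal 0 v x * x ^ k)
        - (v : ℝ)⁻¹ * (gaussianPDFReal 0 v x * x ^ (k + 2))) x := by
    refine ((hasDerivAt_gaussianPDFReal_zero v x).mul (hasDerivAt_pow (k + 1) x)).congr_deriv ?_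
    push_cast; field_simp; ring
  have h := integral_eq_zero_of_hasDerivAt_of_integrable hderiv
    (((hint k).const_mul _).sub ((hint (k + 2)).const_mul _)) (hint (k + 1))
  rw [integral_sub ((hint k).const_mul _) ((hint (k + 2)).const_mul _), integral_const_mul,
    integral_const_mul, sub_eq_zero] at h
  simp only [integral_gaussianReal_eq_integral_smul hv, smul_eq_mul]
  field_simp at h
  linarith

lemma integral_pow_gaussianReal_zero_one (k : ℕ) :
    ∫ x, x ^ k ∂gaussianReal 0 1 = numPairings k := by
  induction k using Nat.strong_induction_on with
  | _ k ih =>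
    match k with
    | 0 => simp [numPairings]
    | 1 => simp [numPairings]
    | k + 2 =>
      rw [integral_pow_add_two_gaussianReal one_ne_zero, ih k (by omega), numPairings]
      push_cast; ring

section GaussianVector

variable {ι κ : Type*} [Fintype κ]

lemma integrable_prod_pow_stdGaussianPi (k : κ → ℕ) :
    Integrable (fun x => ∏ j, x j ^ k j) (stdGaussianPi κ) :=
  Integrable.fintype_prod fun j => integrable_pow_gaussianReal 0 1 (k j)

lemma integral_prod_pow_stdGaussianPi (k : κ → ℕ) :
    ∫ x, ∏ j, x j ^ k j ∂stdGaussianPi κ = ∏ j, (numPairings (k j) : ℝ) := by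
  rw [stdGaussianPi, integral_fintype_prod_eq_prod fun j t => t ^ k j]
  simp [integral_pow_gaussianReal_zero_one]

variable [Fintype ι] [DecidableEq ι] [DecidableEq κ]

lemma prod_mulVec_eq_sum (L : Matrix ι κ ℝ) (x : κ → ℝ) :
    ∏ a, (L *ᵥ x) a =
      ∑ f : ι → κ, (∏ a, L a (f a)) * ∏ j, x j ^ Fintype.card {a // f a = j} := by
  simp only [mulVec, dotProduct, Fintype.prod_sum, Finset.prod_mul_distrib]
  refine sum_congr rfl fun f _ => ?_
  rw [← Fintype.prod_fiberwise' f x]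
  simp

lemma integrable_prod_mulVec_stdGaussianPi (L : Matrix ι κ ℝ) :
    Integrable (fun x => ∏ a, (L *ᵥ x) a) (stdGaussianPi κ) := by
  simp_rw [prod_mulVec_eq_sum]
  exact integrable_finsetSum _ fun f _ => (integrable_prod_pow_stdGaussianPi _).const_mul _

end GaussianVector

lemma integral_prod_mulVec_stdGaussianPi {ι κ : Type*} [Fintype ι] [LinearOrder ι] [Fintype κ]
    [DecidableEq κ] (L : Matrix ι κ ℝ) :
    ∫ x, ∏ a, (L *ᵥ x) a ∂stdGaussianPi κ =
      ∑ σ ∈ fixedPointFreeInvolutions ι,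
        ∏ a ∈ univ.filter (fun a => a < σ a), (L * Lᵀ) a (σ a) := by
  simp_rw [prod_mulVec_eq_sum]
  rw [integral_finsetSum _ fun f _ => (integrable_prod_pow_stdGaussianPi _).const_mul _]
  calc ∑ f : ι → κ, ∫ x, (∏ a, L a (f a)) * ∏ j, x j ^ Fintype.card {a // f a = j} ∂stdGaussianPi κ
      = ∑ f : ι → κ, ∑ σ ∈ fixedPointFreeInvolutions ι,
          if f ∘ σ = f then ∏ a, L a (f a) else 0 := by
        refine sum_congr rfl fun f _ => ?_
        rw [← sum_filter, sum_const, card_fixedPointFreeInvolutions_filter_comp_eq f,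
          integral_const_mul, integral_prod_pow_stdGaussianPi, nsmul_eq_mul, mul_comm]
        push_cast
        rfl
    _ = ∑ σ ∈ fixedPointFreeInvolutions ι,
          ∑ f ∈ univ.filter (fun f : ι → κ => f ∘ σ = f), ∏ a, L a (f a) := by
        rw [sum_comm]
        simp_rw [sum_filter]
    _ = _ := sum_congr rfl fun σ hσ => sum_filter_comp_eq_prod_mul_transpose hσ L

lemma hafnian_eq_sum_fixedPointFreeInvolutions {m : ℕ} (S : Matrix (Fin m) (Fin m) ℝ) :
    hafnian S =
      ∑ σ ∈ fixedPointFreeInvolutions (Fin m), ∏ a ∈ univ.filter (fun a => a < σ a), S a (σ a) := by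
  unfold hafnian fixedPointFreeInvolutions
  congr!

theorem stmt_14_general {Ω : Type*} [MeasureSpace Ω]
    {l : ℕ} (w : Ω → Fin (2 * l) → ℝ) (hwmeas : Measurable w)
    (S : Matrix (Fin (2 * l)) (Fin (2 * l)) ℝ)
    (hw : IsCenteredGaussian (Measure.map w volume) S) :
    Integrable (fun ω => ∏ a, w ω a) volume ∧
      (∫ ω, ∏ a, w ω a) = hafnian S := by
  obtain ⟨L, rfl, hmap⟩ := hw
  have hprod : Measurable fun y : Fin (2 * l) → ℝ => ∏ a, y a := by fun_prop
  have hL : Measurable L.mulVec := by fun_prop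
  constructor
  · refine (integrable_map_measure hprod.aestronglyMeasurable hwmeas.aemeasurable).1 ?_
    rw [hmap, integrable_map_measure hprod.aestronglyMeasurable hL.aemeasurable]
    exact integrable_prod_mulVec_stdGaussianPi L
  · rw [← integral_map hwmeas.aemeasurable hprod.aestronglyMeasurable, hmap,
      integral_map hL.aemeasurable hprod.aestronglyMeasurable,
      integral_prod_mulVec_stdGaussianPi L, hafnian_eq_sum_fixedPointFreeInvolutions]

/-- Wick's formula — the full mixed moment `E[∏ w_a]` of a centered
Gaussian vector of even dimension `2l` equals the hafnian of its covariance matrix. -/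
theorem stmt_14 {Ω : Type*} [MeasureSpace Ω] [IsProbabilityMeasure (volume : Measure Ω)]
    {l : ℕ} (hl : 1 ≤ l) (w : Ω → Fin (2 * l) → ℝ) (hwmeas : Measurable w)
    (S : Matrix (Fin (2 * l)) (Fin (2 * l)) ℝ) (hS : S.PosSemidef)
    (hw : IsCenteredGaussian (Measure.map w volume) S) :
    Integrable (fun ω => ∏ a, w ω a) volume ∧
      (∫ ω, ∏ a, w ω a) = hafnian S :=
  stmt_14_general w hwmeas S hw
end

section
/- In the fixed-design ridge regression model with true parameters (W, a), assume additionally that the noise columns are uncorrelated across time with common covariance: E[ε(t) ε(s)ᵀ] = δ_{ts} Σ_ε for a fixed symmetric positive semidefinite Σ_ε ∈ M_q(ℝ). Then the covariance matrix Σ_a of the intercept estimator â_λ := (1/T)(Y − Ŵ_λᵀ X) 1_T is given by Σ_a = (1/T)·( 1 + (1/T)·trace( (I_N − λT R) R X 1_T 1_Tᵀ Xᵀ ) )·Σ_ε, i.e., for all k, l ∈ {1,…,q}, Cov((â_λ)_k, (â_λ)_l) = (1/T)(1 + (1/T) trace((I_N − λT R) R X 1_T 1_Tᵀ Xᵀ))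 (Σ_ε)_{kl}. -/
/-!
The intercept estimator is linear in the noise: with `A` symmetric, `R` symmetric and
`v := 1_T - A Xᵀ R X 1_T`, one has `(Y - Ŵ_λᵀ X) 1_T = Y v`, so
`â_λ = (1/T) (B v + E v)` with `B` deterministic and `E` the noise matrix. Uncorrelated noise
of common covariance `Σ_ε` gives `Cov(â_λ) = T⁻² ‖v‖² Σ_ε`. Since `A` is a projection with
`A 1_T = 0`, `‖v‖² = T + wᵀ A w` for `w = Xᵀ R X 1_T`, and `R (X A Xᵀ) R = (I - λT R) R`
(a consequence of `R (X A Xᵀ + λT I) R = R`) turns `wᵀ A w` into the trace of the statement.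
-/

open Matrix MeasureTheory ProbabilityTheory

theorem inv_mul_inv_mul_self {G₀ : Type*} [CommGroupWithZero G₀] (a : G₀) :
    a⁻¹ * a⁻¹ * a = a⁻¹ := by
  rw [mul_assoc, mul_comm _ a, ← mul_assoc]
  simpa using mul_inv_mul_cancel a⁻¹

namespace Matrix

theorem vecMulVec_one_one {m n α : Type*} [MulOneClass α] :
    vecMulVec (1 : m → α) (1 : n → α) = of fun _ _ => 1 := by
  ext
  simp [vecMulVec_apply]

section Centering

variable {ι : Type*} [Fintype ι] [DecidableEq ι]

noncomputable def centeringMatrix (ι : Type*) [Fintype ι] [DecidableEq ι] : Matrix ι ι ℝ :=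
  1 - (Fintype.card ι : ℝ)⁻¹ • of fun _ _ => 1

theorem centeringMatrix_transpose : (centeringMatrix ι)ᵀ = centeringMatrix ι := by
  rw [centeringMatrix, ← vecMulVec_one_one, transpose_sub, transpose_smul, transpose_vecMulVec,
    transpose_one]

theorem centeringMatrix_mulVec_one : centeringMatrix ι *ᵥ 1 = 0 := by
  ext i
  have : Nonempty ι := ⟨i⟩
  have hcard : (Fintype.card ι : ℝ) ≠ 0 := Nat.cast_ne_zero.2 Fintype.card_ne_zero
  rw [centeringMatrix, ← vecMulVec_one_one, sub_mulVec, smul_mulVec, vecMulVec_mulVec,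
    one_dotProduct_one]
  simp [hcard]

theorem centeringMatrix_mul_self :
    centeringMatrix ι * centeringMatrix ι = centeringMatrix ι := by
  have hJ : vecMulVec (1 : ι → ℝ) (1 : ι → ℝ) * vecMulVec (1 : ι → ℝ) (1 : ι → ℝ) =
      (Fintype.card ι : ℝ) • vecMulVec (1 : ι → ℝ) (1 : ι → ℝ) := by
    rw [vecMulVec_mul_vecMulVec, one_dotProduct_one, vecMulVec_smul]
  simp only [centeringMatrix, ← vecMulVec_one_one, sub_mul, mul_sub, one_mul, mul_one,
    smul_mul_smul_comm, hJ, smul_smul, inv_mul_inv_mul_self]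
  abel

end Centering

section Ridge

variable {ι n κ : Type*} [Fintype ι] [Fintype n] [DecidableEq n]

/-- Holds also for singular `S`, since then `S⁻¹ = 0`. -/
theorem nonsing_inv_mul_mul_nonsing_inv (S : Matrix n n ℝ) : S⁻¹ * S * S⁻¹ = S⁻¹ := by
  rcases S.nonsing_inv_cancel_or_zero with ⟨hSS, -⟩ | hS
  · rw [hSS, one_mul]
  · rw [hS, zero_mul, zero_mul]

noncomputable def ridgeInv (X : Matrix n ι ℝ) (A : Matrix ι ι ℝ) (c : ℝ) : Matrix n n ℝ :=
  (X * A * Xᵀ + c • 1)⁻¹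

theorem transpose_ridgeInv (X : Matrix n ι ℝ) {A : Matrix ι ι ℝ} (hAt : Aᵀ = A) (c : ℝ) :
    (ridgeInv X A c)ᵀ = ridgeInv X A c := by
  rw [ridgeInv, transpose_nonsing_inv, transpose_add, transpose_smul, transpose_one,
    transpose_mul, transpose_mul, transpose_transpose, hAt, Matrix.mul_assoc]

theorem ridgeInv_mul_mul_ridgeInv (X : Matrix n ι ℝ) (A : Matrix ι ι ℝ) (c : ℝ) :
    ridgeInv X A c * (X * A * Xᵀ) * ridgeInv X A c = (1 - c • ridgeInv X A c) * ridgeInv X A c := by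
  have h := nonsing_inv_mul_mul_nonsing_inv (X * A * Xᵀ + c • 1)
  rw [mul_add, add_mul, mul_smul_comm, mul_one, smul_mul_assoc] at h
  rw [sub_mul, one_mul, smul_mul_assoc]
  exact eq_sub_of_add_eq h

omit [DecidableEq n] in
theorem transpose_mulVec_dotProduct (M : Matrix n ι ℝ) (x : n → ℝ) (y : ι → ℝ) :
    (Mᵀ *ᵥ x) ⬝ᵥ y = x ⬝ᵥ (M *ᵥ y) := by
  rw [mulVec_transpose, ← dotProduct_mulVec]

theorem dotProduct_self_sub_mulVec {A : Matrix ι ι ℝ} (hAt : Aᵀ = A) (hAA : A * A = A)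
    {u : ι → ℝ} (hAu : A *ᵥ u = 0) (w : ι → ℝ) :
    (u - A *ᵥ w) ⬝ᵥ (u - A *ᵥ w) = u ⬝ᵥ u + w ⬝ᵥ (A *ᵥ w) := by
  have hu : ∀ x, u ⬝ᵥ (A *ᵥ x) = 0 := fun x => by
    rw [dotProduct_mulVec, ← mulVec_transpose, hAt, hAu, zero_dotProduct]
  have hw : (A *ᵥ w) ⬝ᵥ (A *ᵥ w) = w ⬝ᵥ (A *ᵥ w) := by
    rw [dotProduct_mulVec, ← mulVec_transpose, hAt, mulVec_mulVec, hAA, dotProduct_comm]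
  rw [sub_dotProduct, dotProduct_sub, dotProduct_sub, hu, dotProduct_comm (A *ᵥ w) u, hu, hw]
  ring

omit [DecidableEq n] in
theorem dotProduct_mulVec_eq_trace (X : Matrix n ι ℝ) (A : Matrix ι ι ℝ) {R : Matrix n n ℝ}
    (hRt : Rᵀ = R) (u : ι → ℝ) :
    (Xᵀ *ᵥ (R *ᵥ (X *ᵥ u))) ⬝ᵥ (A *ᵥ (Xᵀ *ᵥ (R *ᵥ (X *ᵥ u)))) =
      trace (R * (X * A * Xᵀ) * R * X * vecMulVec u u * Xᵀ) := by
  rw [mul_vecMulVec, vecMulVec_mul, trace_vecMulVec, vecMul_transpose,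
    transpose_mulVec_dotProduct, ← hRt, transpose_mulVec_dotProduct, hRt, dotProduct_comm]
  simp only [mulVec_mulVec, Matrix.mul_assoc]

omit [DecidableEq n] in
theorem sub_transpose_mul_mulVec (Y : Matrix κ ι ℝ) (X : Matrix n ι ℝ) {A : Matrix ι ι ℝ}
    (hAt : Aᵀ = A) {R : Matrix n n ℝ} (hRt : Rᵀ = R) (u : ι → ℝ) :
    (Y - (R * X * A * Yᵀ)ᵀ * X) *ᵥ u = Y *ᵥ (u - A *ᵥ (Xᵀ *ᵥ (R *ᵥ (X *ᵥ u)))) := by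
  simp only [transpose_mul, transpose_transpose, hAt, hRt, sub_mulVec, mulVec_sub, mulVec_mulVec,
    Matrix.mul_assoc]

theorem ridge_residual_dotProduct_self (X : Matrix n ι ℝ) {A : Matrix ι ι ℝ}
    (hAt : Aᵀ = A) (hAA : A * A = A) {u : ι → ℝ} (hAu : A *ᵥ u = 0) (c : ℝ) :
    (u - A *ᵥ (Xᵀ *ᵥ (ridgeInv X A c *ᵥ (X *ᵥ u)))) ⬝ᵥ
        (u - A *ᵥ (Xᵀ *ᵥ (ridgeInv X A c *ᵥ (X *ᵥ u)))) =
      u ⬝ᵥ u + trace ((1 - c • ridgeInv X A c) * ridgeInv X A c * X * vecMulVec u u * Xᵀ) := by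
  rw [dotProduct_self_sub_mulVec hAt hAA hAu,
    dotProduct_mulVec_eq_trace X A (transpose_ridgeInv X hAt c), ridgeInv_mul_mul_ridgeInv]

end Ridge

end Matrix

section Covariance

variable {Ω ι κ : Type*} [MeasurableSpace Ω] {μ : Measure Ω}

theorem covariance_eval_eval_of_integral_eq_zero [Fintype κ] [IsProbabilityMeasure μ]
    {X Y : Ω → κ → ℝ} (hX : MemLp X 2 μ) (hY : MemLp Y 2 μ) (hX0 : ∫ ω, X ω ∂μ = 0) (k l : κ) :
    cov[fun ω => X ω k, fun ω => Y ω l; μ] = ∫ ω, X ω k * Y ω l ∂μ := by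
  rw [covariance_eq_sub (hX.eval k) (hY.eval l),
    ← eval_integral (fun i => (hX.eval i).integrable one_le_two), hX0]
  simp

theorem covariance_sum_mul_sum_mul [Fintype ι] [DecidableEq ι] [IsFiniteMeasure μ]
    {X Y : ι → Ω → ℝ} (hX : ∀ t, MemLp (X t) 2 μ) (hY : ∀ t, MemLp (Y t) 2 μ) {σ : ℝ}
    (hXY : ∀ t s, cov[X t, Y s; μ] = if t = s then σ else 0) (v : ι → ℝ) :
    cov[fun ω => ∑ t, X t ω * v t, fun ω => ∑ t, Y t ω * v t; μ] = v ⬝ᵥ v * σ := by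
  rw [covariance_fun_sum_fun_sum (X := fun t ω => X t ω * v t) (Y := fun t ω => Y t ω * v t)
    (fun t => (hX t).mul_const (v t)) (fun t => (hY t).mul_const (v t))]
  simp only [covariance_mul_const_right, covariance_mul_const_left, hXY, ite_mul, zero_mul,
    Finset.sum_ite_eq, Finset.mem_univ, if_true, dotProduct, Finset.sum_mul]
  exact Finset.sum_congr rfl fun _ _ => by ring

end Covariance

theorem stmt_19_general {Ω : Type*} [MeasureSpace Ω] [IsProbabilityMeasure (volume : Measure Ω)]
    {N q T : ℕ} (lam : ℝ)
    (X : Matrix (Fin N) (Fin T) ℝ) (W : Matrix (Fin N) (Fin q) ℝ) (a : Fin q → ℝ)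
    (ε : Fin T → Ω → Fin q → ℝ)
    (hε2 : ∀ t, MemLp (ε t) 2 volume)
    (hεmean : ∀ t, (∫ ω, ε t ω) = 0)
    (Sε : Matrix (Fin q) (Fin q) ℝ)
    (hεcov : ∀ (t s : Fin T) (k l : Fin q),
      (∫ ω, ε t ω k * ε s ω l) = if t = s then Sε k l else 0)
    (Y : Ω → Matrix (Fin q) (Fin T) ℝ)
    (hY : Y = fun ω => Matrix.of fun k t => a k + (Wᵀ * X) k t + ε t ω k)
    (A : Matrix (Fin T) (Fin T) ℝ)
    (hA : A = 1 - (T : ℝ)⁻¹ • Matrix.of (fun _ _ => (1 : ℝ)))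
    (R : Matrix (Fin N) (Fin N) ℝ)
    (hR : R = (X * A * Xᵀ + (lam * T) • (1 : Matrix (Fin N) (Fin N) ℝ))⁻¹)
    (What : Ω → Matrix (Fin N) (Fin q) ℝ)
    (hWhat : What = fun ω => R * X * A * (Y ω)ᵀ)
    (ahat : Ω → Fin q → ℝ)
    (hahat : ahat = fun ω => (T : ℝ)⁻¹ • (Y ω - (What ω)ᵀ * X).mulVec fun _ => 1) :
    ∀ k l : Fin q,
      (∫ ω, ahat ω k * ahat ω l) - (∫ ω, ahat ω k) * (∫ ω, ahat ω l)
        = (T : ℝ)⁻¹ * (1 + (T : ℝ)⁻¹ *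
            Matrix.trace (((1 : Matrix (Fin N) (Fin N) ℝ) - (lam * T) • R) * R
              * X * Matrix.of (fun _ _ : Fin T => (1 : ℝ)) * Xᵀ)) * Sε k l := by
  intro k l
  have hAc : A = centeringMatrix (Fin T) := by rw [hA, centeringMatrix, Fintype.card_fin]
  have hAt : Aᵀ = A := hAc ▸ centeringMatrix_transpose
  replace hR : R = ridgeInv X A (lam * T) := hR
  have hRt : Rᵀ = R := by rw [hR, transpose_ridgeInv X hAt]
  set v : Fin T → ℝ := 1 - A *ᵥ (Xᵀ *ᵥ (R *ᵥ (X *ᵥ 1))) with hv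
  set b : Fin q → ℝ := of (fun k t => a k + (Wᵀ * X) k t) *ᵥ v
  set noise : Fin q → Ω → ℝ := fun k ω => ∑ t, ε t ω k * v t
  have hahat_eq : ∀ k, (fun ω => ahat ω k) = fun ω => (T : ℝ)⁻¹ * (b k + noise k ω) := by
    intro k
    ext ω
    have hYω : Y ω = of (fun k t => a k + (Wᵀ * X) k t) + of fun k t => ε t ω k := by
      rw [hY]; rfl
    simp only [hahat, hWhat, Pi.smul_apply, smul_eq_mul]
    rw [sub_transpose_mul_mulVec _ X hAt hRt, hYω, add_mulVec]
    rfl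
  have hnoise : ∀ k, MemLp (noise k) 2 volume := fun k =>
    memLp_finsetSum _ fun t _ => ((hε2 t).eval k).mul_const (v t)
  have hahat2 : ∀ k, MemLp (fun ω => ahat ω k) 2 volume := fun k => by
    rw [hahat_eq k]
    exact ((memLp_const (b k)).add (hnoise k)).const_mul (T : ℝ)⁻¹
  have hεcov' : ∀ t s, cov[fun ω => ε t ω k, fun ω => ε s ω l] = if t = s then Sε k l else 0 :=
    fun t s => by rw [covariance_eval_eval_of_integral_eq_zero (hε2 t) (hε2 s) (hεmean t), hεcov]
  calc (∫ ω, ahat ω k * ahat ω l) - (∫ ω, ahat ω k) * (∫ ω, ahat ω l)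
      = cov[fun ω => ahat ω k, fun ω => ahat ω l] := (covariance_eq_sub (hahat2 k) (hahat2 l)).symm
    _ = (T : ℝ)⁻¹ * ((T : ℝ)⁻¹ * (v ⬝ᵥ v * Sε k l)) := by
      rw [hahat_eq, hahat_eq, covariance_const_mul_left, covariance_const_mul_right,
        covariance_const_add_left ((hnoise k).integrable one_le_two),
        covariance_const_add_right ((hnoise l).integrable one_le_two),
        covariance_sum_mul_sum_mul (fun t => (hε2 t).eval k) (fun t => (hε2 t).eval l) hεcov' v]
    _ = _ := by
      rw [hv, hR, ridge_residual_dotProduct_self X hAt (hAc ▸ centeringMatrix_mul_self)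
        (hAc ▸ centeringMatrix_mulVec_one), vecMulVec_one_one, one_dotProduct_one, Fintype.card_fin]
      linear_combination Sε k l * inv_mul_inv_mul_self (T : ℝ)

/-- in the fixed-design ridge regression model with centered,
time-uncorrelated noise of common covariance `Σ_ε`, the covariance matrix of the ridge
intercept estimator `â_λ` is
`Σ_a = (1/T)(1 + (1/T) trace((I − λT R) R X 1_T 1_Tᵀ Xᵀ)) Σ_ε`. -/
theorem stmt_19 {Ω : Type*} [MeasureSpace Ω] [IsProbabilityMeasure (volume : Measure Ω)]
    {N q T : ℕ} (hT : 1 ≤ T) (lam : ℝ) (hlam : 0 < lam)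
    (X : Matrix (Fin N) (Fin T) ℝ) (W : Matrix (Fin N) (Fin q) ℝ) (a : Fin q → ℝ)
    (ε : Fin T → Ω → Fin q → ℝ)
    (hε2 : ∀ t, MemLp (ε t) 2 volume)
    (hεmean : ∀ t, (∫ ω, ε t ω) = 0)
    (Sε : Matrix (Fin q) (Fin q) ℝ) (hSε : Sε.PosSemidef)
    (hεcov : ∀ (t s : Fin T) (k l : Fin q),
      (∫ ω, ε t ω k * ε s ω l) = if t = s then Sε k l else 0)
    (Y : Ω → Matrix (Fin q) (Fin T) ℝ)
    (hY : Y = fun ω => Matrix.of fun k t => a k + (Wᵀ * X) k t + ε t ω k)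
    (A : Matrix (Fin T) (Fin T) ℝ)
    (hA : A = 1 - (T : ℝ)⁻¹ • Matrix.of (fun _ _ => (1 : ℝ)))
    (R : Matrix (Fin N) (Fin N) ℝ)
    (hR : R = (X * A * Xᵀ + (lam * T) • (1 : Matrix (Fin N) (Fin N) ℝ))⁻¹)
    (What : Ω → Matrix (Fin N) (Fin q) ℝ)
    (hWhat : What = fun ω => R * X * A * (Y ω)ᵀ)
    (ahat : Ω → Fin q → ℝ)
    (hahat : ahat = fun ω => (T : ℝ)⁻¹ • (Y ω - (What ω)ᵀ * X).mulVec fun _ => 1) :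
    ∀ k l : Fin q,
      (∫ ω, ahat ω k * ahat ω l) - (∫ ω, ahat ω k) * (∫ ω, ahat ω l)
        = (T : ℝ)⁻¹ * (1 + (T : ℝ)⁻¹ *
            Matrix.trace (((1 : Matrix (Fin N) (Fin N) ℝ) - (lam * T) • R) * R
              * X * Matrix.of (fun _ _ : Fin T => (1 : ℝ)) * Xᵀ)) * Sε k l :=
  stmt_19_general lam X W a ε hε2 hεmean Sε hεcov Y hY A hA R hR What hWhat ahat hahat
end
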